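/- (Lower bound on the number of extreme points.) Assume m ≥ 2n + 2 − ℓ. Let w* ∈ S be a maximizer of the dual problem, suppose the coefficient pair (α̃, β̃) attains d(w*), i.e., Σ_j w*_j |q̃(x_j)|² = 1 and Σ_j w*_j |f_j q̃(x_j) − p̃(x_j)|² = d(w*), suppose β̃_j ≠ 0 for all j ∈ {1, …, ℓ} and q̃(x_j) ≠ 0 for all j ∈ {1, …, m}, and suppose √(d(w*)) = e(ξ̃) := max_{1≤j≤m} |f_j − p̃(x_j)/q̃(x_j)|. Then the set of extreme points X_e(ξ̃) = { j ∈ {1, …, m} : |f_j − p̃(x_j)/q̃(x_j)| = e(ξ̃) } contains at least n + 2 − ℓ indices. -/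

import Mathlib

open Finset

/-- The denominator of the interpolation-constrained barycentric form:
q(z) = Σ_{j=1}^{n+1} β_j/(z − t_j). -/
noncomputable def baryQ {n : ℕ} (t β : Fin (n + 1) → ℂ) (z : ℂ) : ℂ :=
  ∑ j, β j / (z - t j)

/-- The numerator of the interpolation-constrained barycentric form:
p(z) = Σ_{j<ℓ} β_j y_j/(z − t_j) + Σ_{j≥ℓ} α_j/(z − t_j). -/
noncomputable def baryP {n : ℕ} (ℓ : ℕ) (t y α β : Fin (n + 1) → ℂ) (z : ℂ) : ℂ :=
  ∑ j : Fin (n + 1), (if (j : ℕ) < ℓ then β j * y j else α j) / (z - t j)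

/-- The probability simplex S = {w ∈ ℝ^m : w ≥ 0, Σ_j w_j = 1}. -/
def inS {m : ℕ} (w : Fin m → ℝ) : Prop :=
  (∀ j, 0 ≤ w j) ∧ ∑ j, w j = 1

/-- The Lagrange dual function
d(w) = inf { Σ_j w_j |f_j q(x_j) − p(x_j)|² : (α, β), Σ_j w_j |q(x_j)|² = 1 }. -/
noncomputable def dualFun {n m : ℕ} (ℓ : ℕ) (t y : Fin (n + 1) → ℂ)
    (x f : Fin m → ℂ) (w : Fin m → ℝ) : ℝ :=
  sInf {r : ℝ | ∃ α β : Fin (n + 1) → ℂ,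
    (∑ j, w j * ‖baryQ t β (x j)‖ ^ 2) = 1 ∧
    r = ∑ j, w j * ‖f j * baryQ t β (x j) - baryP ℓ t y α β (x j)‖ ^ 2}

/-!
Strong duality `√d(w*) = e(ξ̃)` turns the attained dual value into complementary slackness:
`Σ w*_j |q̃(x_j)|² (e(ξ̃)² - |f_j - ξ̃(x_j)|²) = 0` with nonnegative terms, so every index in the
support of `w*` is an extreme point. Conversely, if the support had at most `n + 1 - ℓ` indices,
the barycentric form could interpolate `f` on it exactly: take `q` to be the barycentric
representation of the nodal polynomial of `t_1, …, t_ℓ` (so the constraints on `β_j`, `j ≤ ℓ`,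
disappear) and `p` that of its product with the interpolant of `f` on the support. Then
`d(w*) = 0`, all points are extreme, and `m ≥ n + 2 - ℓ` finishes the count.
-/

open Polynomial Lagrange

theorem eq_of_weighted_mean_eq_of_le {ι : Type*} [Fintype ι] {c u : ι → ℝ} {M : ℝ}
    (hc : ∀ j, 0 ≤ c j) (hu : ∀ j, u j ≤ M) (hsum : ∑ j, c j = 1)
    (hmean : ∑ j, c j * u j = M) {j : ι} (hj : c j ≠ 0) : u j = M := by
  have hzero : ∑ i, c i * (M - u i) = 0 := by
    simp only [mul_sub, sum_sub_distrib, ← sum_mul, hsum, hmean, one_mul, sub_self]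
  have hj0 := (sum_eq_zero_iff_of_nonneg fun i _ => mul_nonneg (hc i) (sub_nonneg.2 (hu i))).1
    hzero j (mem_univ j)
  linarith [(mul_eq_zero.1 hj0).resolve_left hj]

theorem norm_sub_div_eq_of_weighted_sum_eq {ι : Type*} [Fintype ι] {w : ι → ℝ}
    {f p q : ι → ℂ} {E : ℝ} (hw : ∀ j, 0 ≤ w j) (hq : ∀ j, q j ≠ 0)
    (hle : ∀ j, ‖f j - p j / q j‖ ≤ E) (hnorm : ∑ j, w j * ‖q j‖ ^ 2 = 1)
    (hres : ∑ j, w j * ‖f j * q j - p j‖ ^ 2 = E ^ 2) {j : ι} (hj : w j ≠ 0) :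
    ‖f j - p j / q j‖ = E := by
  have hfactor : ∀ i, ‖f i * q i - p i‖ = ‖f i - p i / q i‖ * ‖q i‖ := fun i => by
    rw [← norm_mul, sub_mul, div_mul_cancel₀ _ (hq i)]
  have hsq : ‖f j - p j / q j‖ ^ 2 = E ^ 2 := by
    refine eq_of_weighted_mean_eq_of_le (c := fun i => w i * ‖q i‖ ^ 2)
      (fun i => mul_nonneg (hw i) (sq_nonneg _))
      (fun i => pow_le_pow_left₀ (norm_nonneg _) (hle i) 2) hnorm ?_
      (mul_ne_zero hj (pow_ne_zero 2 (norm_ne_zero_iff.2 (hq j))))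
    rw [← hres]
    exact sum_congr rfl fun i _ => by rw [hfactor, mul_pow]; ring
  exact (sq_eq_sq₀ (norm_nonneg _) ((norm_nonneg _).trans (hle j))).1 hsq

section Barycentric

variable {n : ℕ} {t : Fin (n + 1) → ℂ}

theorem baryQ_smul (β : Fin (n + 1) → ℂ) (c z : ℂ) :
    baryQ t (c • β) z = c * baryQ t β z := by
  simp only [baryQ, mul_sum, Pi.smul_apply, smul_eq_mul, mul_div_assoc]

theorem baryP_smul (ℓ : ℕ) (y α β : Fin (n + 1) → ℂ) (c z : ℂ) :
    baryP ℓ t y (c • α) (c • β) z = c * baryP ℓ t y α β z := by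
  simp only [baryP, mul_sum, Pi.smul_apply, smul_eq_mul, ← mul_div_assoc, apply_ite (c * ·),
    mul_assoc]

theorem baryP_eq_baryQ_of_eq_zero {ℓ : ℕ} {y α β : Fin (n + 1) → ℂ}
    (hα : ∀ i : Fin (n + 1), (i : ℕ) < ℓ → α i = 0)
    (hβ : ∀ i : Fin (n + 1), (i : ℕ) < ℓ → β i = 0) (z : ℂ) :
    baryP ℓ t y α β z = baryQ t α z := by
  refine sum_congr rfl fun i _ => ?_
  split_ifs with hi
  · rw [hα i hi, hβ i hi, zero_mul]
  · rfl

theorem eval_nodal_mul_baryQ (ht : Function.Injective t) {P : ℂ[X]}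
    (hP : P.degree < (n + 1 : ℕ)) {z : ℂ} (hz : ∀ i, z ≠ t i) :
    (nodal univ t).eval z * baryQ t (fun i => nodalWeight univ t i * P.eval (t i)) z =
      P.eval z := by
  conv_rhs => rw [eq_interpolate (f := P) (s := univ) ht.injOn (by simpa using hP),
    eval_interpolate_not_at_node _ fun i _ => hz i]
  congr 1
  exact sum_congr rfl fun i _ => by rw [div_eq_mul_inv]; ring

theorem exists_baryP_eq_mul_baryQ {m : ℕ} (ℓ : ℕ) (y : Fin (n + 1) → ℂ) (x f : Fin m → ℂ)
    (ht : Function.Injective t) (hxt : ∀ j i, x j ≠ t i) {s : Finset (Fin m)}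
    (hxs : Set.InjOn x s) (hℓ : ℓ ≤ n) (hs : ℓ + #s ≤ n + 1) :
    ∃ α β : Fin (n + 1) → ℂ, (∀ j, baryQ t β (x j) ≠ 0) ∧
      ∀ j ∈ s, baryP ℓ t y α β (x j) = f j * baryQ t β (x j) := by
  set Q : ℂ[X] := nodal {i : Fin (n + 1) | (i : ℕ) < ℓ} t
  set R : ℂ[X] := Q * interpolate s x f
  have hQdeg : Q.degree = ℓ := by
    rw [degree_nodal, Fin.card_filter_val_lt, min_eq_right (by omega)]
  have hRdeg : R.degree < (n + 1 : ℕ) := by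
    rw [degree_mul, hQdeg]
    calc (ℓ : WithBot ℕ) + (interpolate s x f).degree < ℓ + #s :=
          WithBot.add_lt_add_left WithBot.coe_ne_bot (degree_interpolate_lt _ hxs)
      _ ≤ (n + 1 : ℕ) := by exact_mod_cast hs
  have hQt : ∀ i : Fin (n + 1), (i : ℕ) < ℓ → Q.eval (t i) = 0 := fun i hi =>
    eval_nodal_at_node (by simpa using hi)
  have hN : ∀ j, (nodal univ t).eval (x j) ≠ 0 := fun j =>
    eval_nodal_not_at_node fun i _ => hxt j i
  have hQ := fun j => eval_nodal_mul_baryQ ht (hQdeg.trans_lt (by exact_mod_cast by omega))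
    (hxt j)
  have hR := fun j => eval_nodal_mul_baryQ ht hRdeg (hxt j)
  refine ⟨fun i => nodalWeight univ t i * R.eval (t i),
    fun i => nodalWeight univ t i * Q.eval (t i), fun j hq => ?_, fun j hj => ?_⟩
  · refine eval_nodal_not_at_node (s := {i : Fin (n + 1) | (i : ℕ) < ℓ})
      (fun i _ => hxt j i) ?_
    rw [← hQ j, hq, mul_zero]
  · rw [baryP_eq_baryQ_of_eq_zero (fun i hi => by simp [R, hQt i hi])
      (fun i hi => by simp [hQt i hi])]
    refine mul_left_cancel₀ (hN j) ?_
    rw [hR j, eval_mul, eval_interpolate_at_node _ hxs hj, ← hQ j]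
    ring

theorem dualFun_le_div {m : ℕ} (ℓ : ℕ) (y : Fin (n + 1) → ℂ) (x f : Fin m → ℂ)
    {w : Fin m → ℝ} (hw : ∀ j, 0 ≤ w j) (α β : Fin (n + 1) → ℂ)
    (hq : 0 < ∑ j, w j * ‖baryQ t β (x j)‖ ^ 2) :
    dualFun ℓ t y x f w ≤ (∑ j, w j * ‖f j * baryQ t β (x j) - baryP ℓ t y α β (x j)‖ ^ 2) /
      ∑ j, w j * ‖baryQ t β (x j)‖ ^ 2 := by
  set S := ∑ j, w j * ‖baryQ t β (x j)‖ ^ 2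
  set c : ℝ := (Real.sqrt S)⁻¹
  have hc : c ^ 2 = S⁻¹ := by rw [inv_pow, Real.sq_sqrt hq.le]
  have hnorm : ∀ z : ℂ, ‖(c : ℂ) * z‖ ^ 2 = S⁻¹ * ‖z‖ ^ 2 := fun z => by
    rw [norm_mul, mul_pow, Complex.norm_real, Real.norm_eq_abs, sq_abs, hc]
  refine csInf_le ⟨0, ?_⟩ ⟨(c : ℂ) • α, (c : ℂ) • β, ?_, ?_⟩
  · rintro r ⟨α', β', -, rfl⟩
    exact sum_nonneg fun j _ => mul_nonneg (hw j) (sq_nonneg _)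
  · simp only [baryQ_smul, hnorm, mul_left_comm (w _), ← mul_sum]
    exact inv_mul_cancel₀ hq.ne'
  · simp only [baryQ_smul, baryP_smul, mul_left_comm (f _), ← mul_sub, hnorm,
      mul_left_comm (w _), ← mul_sum]
    exact div_eq_inv_mul _ _

theorem dualFun_nonpos_of_card_support_add_le {m : ℕ} (ℓ : ℕ) (y : Fin (n + 1) → ℂ)
    (x f : Fin m → ℂ) (ht : Function.Injective t) (hx : Function.Injective x)
    (hxt : ∀ j i, x j ≠ t i) {w : Fin m → ℝ} (hw : inS w)
    (hcard : #{j | w j ≠ 0} + ℓ ≤ n + 1) : dualFun ℓ t y x f w ≤ 0 := by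
  obtain ⟨j₀, hj₀⟩ : ∃ j, w j ≠ 0 := by
    by_contra! h
    simpa [h] using hw.2
  have hℓ : ℓ ≤ n := by
    have : 0 < #{j | w j ≠ 0} := card_pos.2 ⟨j₀, by simpa using hj₀⟩
    omega
  obtain ⟨α, β, hq, hint⟩ := exists_baryP_eq_mul_baryQ ℓ y x f ht hxt hx.injOn hℓ
    (by rwa [add_comm])
  have hpos : 0 < ∑ j, w j * ‖baryQ t β (x j)‖ ^ 2 :=
    (mul_pos ((hw.1 j₀).lt_of_ne' hj₀) (pow_pos (norm_pos_iff.2 (hq j₀)) 2)).trans_le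
      (single_le_sum (f := fun j => w j * ‖baryQ t β (x j)‖ ^ 2)
        (fun j _ => mul_nonneg (hw.1 j) (sq_nonneg _)) (mem_univ j₀))
  have hres : ∑ j, w j * ‖f j * baryQ t β (x j) - baryP ℓ t y α β (x j)‖ ^ 2 = 0 :=
    sum_eq_zero fun j _ => by
      by_cases hj : w j = 0
      · rw [hj, zero_mul]
      · rw [hint j (mem_filter.2 ⟨mem_univ j, hj⟩), sub_self, norm_zero]
        ring
  simpa [hres] using dualFun_le_div ℓ y x f hw.1 α β hpos

end Barycentric

theorem extreme_points_lower_bound_general {n m : ℕ} (ℓ : ℕ)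
    (hm2 : 2 * n + 2 - ℓ ≤ m)
    (t : Fin (n + 1) → ℂ) (ht : Function.Injective t) (y : Fin (n + 1) → ℂ)
    (x f : Fin m → ℂ) (hx : Function.Injective x) (hxt : ∀ i j, x i ≠ t j)
    (wstar : Fin m → ℝ) (hwS : inS wstar)
    (αt βt : Fin (n + 1) → ℂ)
    (hfeas : (∑ j, wstar j * ‖baryQ t βt (x j)‖ ^ 2) = 1)
    (hattain : (∑ j, wstar j * ‖f j * baryQ t βt (x j) - baryP ℓ t y αt βt (x j)‖ ^ 2) =
      dualFun ℓ t y x f wstar)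
    (hqx : ∀ j, baryQ t βt (x j) ≠ 0)
    (hsd : Real.sqrt (dualFun ℓ t y x f wstar) =
      ⨆ j, ‖f j - baryP ℓ t y αt βt (x j) / baryQ t βt (x j)‖) :
    n + 2 - ℓ ≤
      {j : Fin m | ‖f j - baryP ℓ t y αt βt (x j) / baryQ t βt (x j)‖ =
        ⨆ i, ‖f i - baryP ℓ t y αt βt (x i) / baryQ t βt (x i)‖}.ncard := by
  set e : Fin m → ℝ := fun j => ‖f j - baryP ℓ t y αt βt (x j) / baryQ t βt (x j)‖
  set E := ⨆ i, e i
  have he : ∀ j, e j ≤ E := le_ciSup (Set.finite_range e).bddAbove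
  have hd : dualFun ℓ t y x f wstar = E ^ 2 := by
    rw [← hsd, Real.sq_sqrt (hattain ▸ sum_nonneg fun j _ => mul_nonneg (hwS.1 j) (sq_nonneg _))]
  have hsupp : ↑({j | wstar j ≠ 0} : Finset (Fin m)) ⊆ {j | e j = E} := fun j hj =>
    norm_sub_div_eq_of_weighted_sum_eq hwS.1 hqx he hfeas (hattain.trans hd) (mem_filter.1 hj).2
  by_contra! hlt
  replace hlt : {j | e j = E}.ncard < n + 2 - ℓ := hlt
  have hcard := (Set.ncard_coe_finset _).symm.trans_le (Set.ncard_le_ncard hsupp)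
  have hE : E = 0 := pow_eq_zero_iff two_ne_zero |>.1 <| le_antisymm
    (hd ▸ dualFun_nonpos_of_card_support_add_le ℓ y x f ht hx hxt hwS
      (by omega)) (sq_nonneg E)
  have hall : {j | e j = E} = Set.univ :=
    Set.eq_univ_of_forall fun j => le_antisymm (he j) (hE ▸ norm_nonneg _)
  rw [hall, Set.ncard_univ, Nat.card_eq_fintype_card, Fintype.card_fin] at hlt
  omega

/-- **Lower bound on the number of extreme points** (Theorem 5.3 of the paper).
Assume m ≥ 2n + 2 − ℓ and the sample nodes are pairwise distinct. Under the
strong-duality conditions — w* maximizes the dual problem, (α̃, β̃) attains d(w*)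
with β̃_j ≠ 0 for j ≤ ℓ and q̃ nonvanishing at the sample nodes, and
√(d(w*)) = e(ξ̃) — the set of extreme points
X_e(ξ̃) = {j : |f_j − ξ̃(x_j)| = e(ξ̃)} contains at least n + 2 − ℓ indices. -/
theorem extreme_points_lower_bound {n m : ℕ} (ℓ : ℕ) (hℓ : ℓ ≤ n + 1) (hm : 0 < m)
    (hm2 : 2 * n + 2 - ℓ ≤ m)
    (t : Fin (n + 1) → ℂ) (ht : Function.Injective t) (y : Fin (n + 1) → ℂ)
    (x f : Fin m → ℂ) (hx : Function.Injective x) (hxt : ∀ i j, x i ≠ t j)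
    (wstar : Fin m → ℝ) (hwS : inS wstar)
    (hwmax : ∀ w : Fin m → ℝ, inS w → dualFun ℓ t y x f w ≤ dualFun ℓ t y x f wstar)
    (αt βt : Fin (n + 1) → ℂ)
    (hfeas : (∑ j, wstar j * ‖baryQ t βt (x j)‖ ^ 2) = 1)
    (hattain : (∑ j, wstar j * ‖f j * baryQ t βt (x j) - baryP ℓ t y αt βt (x j)‖ ^ 2) =
      dualFun ℓ t y x f wstar)
    (hβ : ∀ j : Fin (n + 1), (j : ℕ) < ℓ → βt j ≠ 0)
    (hqx : ∀ j, baryQ t βt (x j) ≠ 0)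
    (hsd : Real.sqrt (dualFun ℓ t y x f wstar) =
      ⨆ j, ‖f j - baryP ℓ t y αt βt (x j) / baryQ t βt (x j)‖) :
    n + 2 - ℓ ≤
      {j : Fin m | ‖f j - baryP ℓ t y αt βt (x j) / baryQ t βt (x j)‖ =
        ⨆ i, ‖f i - baryP ℓ t y αt βt (x i) / baryQ t βt (x i)‖}.ncard :=
  extreme_points_lower_bound_general ℓ hm2 t ht y x f hx hxt wstar hwS αt βt hfeas hattain hqx hsd
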